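/- arXiv:2408.03796 — 2 statements merged into one kernel-verified Lean document; each statement's English description precedes it below -/
import Mathlib

section
/- Farkas' lemma (entailment direction): Let Φ be a satisfiable finite system of non-strict linear inequalities a_{i,0} + a_{i,1}x_1 + … + a_{i,n}x_n ≥ 0 for i = 1..m over real variables x_1,…,x_n. Then Φ entails the linear inequality c_0 + c_1x_1 + … + c_nx_n ≥ 0 if and only if there exist non-negative reals y_0, y_1, …, y_m such that c_0 = y_0 + Σ_{i=1}^m y_i a_{i,0} and c_j = Σ_{i=1}^m y_i a_{i,j} for each j = 1..n. -/
/-!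
Homogenize: the certificate exists iff `(c₀, c)` lies in the cone `K ⊆ ℝ × ℝⁿ` generated by
`(1, 0)` and the rows `(a_{i,0}, a_i)`. A finitely generated cone is closed: a nonnegative
combination of linearly dependent vectors can be shifted along a kernel vector until one
coefficient vanishes, so `K` is a finite union of images of orthants under injective linear maps.
If `(c₀, c) ∉ K`, a separating functional yields `(s, z)` with `s ≥ 0`, `s a_{i,0} + a_i ⬝ z ≥ 0`
and `c₀ s + c ⬝ z < 0`. Adding a small multiple of `(1, x₀)` for a feasible point `x₀` makes
`s > 0`, and then `z / s` is a feasible point violating `c₀ + c ⬝ x ≥ 0`.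
-/

open Matrix

theorem exists_nonneg_sub_smul_eq_zero {ι : Type*} [Fintype ι] {y l : ι → ℝ} (hy : 0 ≤ y)
    (hl : ∃ i, 0 < l i) : ∃ (t : ℝ) (i : ι), 0 ≤ y - t • l ∧ (y - t • l) i = 0 := by
  classical
  obtain ⟨i, hi, hmin⟩ := (Finset.univ.filter fun i => 0 < l i).exists_min_image
    (fun i => y i / l i) (by simpa [Finset.filter_nonempty_iff] using hl)
  rw [Finset.mem_filter] at hi
  refine ⟨y i / l i, i, fun j => ?_, by simp [div_mul_cancel₀ _ hi.2.ne']⟩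
  simp only [Pi.zero_apply, Pi.sub_apply, Pi.smul_apply, smul_eq_mul, sub_nonneg]
  rcases lt_or_ge 0 (l j) with hj | hj
  · exact (le_div_iff₀ hj).mp (hmin j (by simp [hj]))
  · exact (mul_nonpos_of_nonneg_of_nonpos (div_nonneg (hy i) hi.2.le) hj).trans (hy j)

section ConicHull

variable {E : Type*} [AddCommGroup E] [Module ℝ E]

theorem image_linearCombination_Ici_eq_iUnion_succAbove {k : ℕ} {v : Fin (k + 1) → E}
    (hv : ¬LinearIndependent ℝ v) :
    Fintype.linearCombination ℝ v '' Set.Ici 0 =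
      ⋃ i : Fin (k + 1), Fintype.linearCombination ℝ (v ∘ i.succAbove) '' Set.Ici 0 := by
  obtain ⟨g, hg, i₀, hgi₀⟩ := Fintype.not_linearIndependent_iff.mp hv
  obtain ⟨l, hlker, hlpos⟩ : ∃ l ∈ LinearMap.ker (Fintype.linearCombination ℝ v),
      ∃ i, 0 < l i := by
    rcases hgi₀.lt_or_gt with hneg | hpos
    · exact ⟨-g, by simp [Fintype.linearCombination_apply, hg], i₀, by simpa using hneg⟩
    · exact ⟨g, by simp [Fintype.linearCombination_apply, hg], i₀, hpos⟩
  ext x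
  constructor
  · rintro ⟨y, hy, rfl⟩
    obtain ⟨t, i, hnonneg, hzero⟩ := exists_nonneg_sub_smul_eq_zero hy hlpos
    have hshift : Fintype.linearCombination ℝ v (y - t • l) = Fintype.linearCombination ℝ v y := by
      rw [map_sub, map_smul, LinearMap.mem_ker.mp hlker, smul_zero, sub_zero]
    refine Set.mem_iUnion.2 ⟨i, fun j => (y - t • l) (i.succAbove j), fun j => hnonneg _, ?_⟩
    rw [← hshift, Fintype.linearCombination_apply, Fintype.linearCombination_apply,
      Fin.sum_univ_succAbove _ i, hzero, zero_smul, zero_add]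
    rfl
  · rintro ⟨_, ⟨i, rfl⟩, y, hy, rfl⟩
    refine ⟨i.insertNth 0 y, fun j => ?_, by
      simp [Fintype.linearCombination_apply, Fin.sum_univ_succAbove _ i]⟩
    induction j using i.succAboveCases
    exacts [by simp, by simpa using hy _]

variable [TopologicalSpace E] [IsTopologicalAddGroup E] [ContinuousSMul ℝ E] [T2Space E]

theorem isClosed_image_linearCombination_Ici_fin :
    ∀ {k : ℕ} (v : Fin k → E), IsClosed (Fintype.linearCombination ℝ v '' Set.Ici 0)
  | 0, _ => (Set.subsingleton_of_subsingleton.image _).isClosed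
  | k + 1, v => by
    by_cases hv : LinearIndependent ℝ v
    · have hker : LinearMap.ker (Fintype.linearCombination ℝ v) = ⊥ :=
        LinearMap.ker_eq_bot.mpr (linearIndependent_iff_injective_fintypeLinearCombination.mp hv)
      exact (LinearMap.isClosedEmbedding_of_injective hker).isClosedMap _ isClosed_Ici
    · rw [image_linearCombination_Ici_eq_iUnion_succAbove hv]
      exact isClosed_iUnion_of_finite fun i => isClosed_image_linearCombination_Ici_fin _

theorem isClosed_image_linearCombination_Ici {ι : Type*} [Fintype ι] (v : ι → E) :
    IsClosed (Fintype.linearCombination ℝ v '' Set.Ici 0) := by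
  let e := Fintype.equivFin ι
  convert isClosed_image_linearCombination_Ici_fin (v ∘ e.symm) using 1
  ext x
  simp only [Set.mem_image, Set.mem_Ici, Fintype.linearCombination_apply, Function.comp_apply]
  constructor
  · rintro ⟨y, hy, rfl⟩
    exact ⟨y ∘ e.symm, fun j => hy _, e.symm.sum_comp fun i => y i • v i⟩
  · rintro ⟨y, hy, rfl⟩
    exact ⟨y ∘ e, fun i => hy _, by simpa using e.sum_comp fun j => y j • v (e.symm j)⟩

end ConicHull

section AffineFarkas

variable {m n : Type*}

def farkasGenerators (A : Matrix m n ℝ) (b : m → ℝ) : Option m → ℝ × (n → ℝ)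
  | none => (1, 0)
  | some i => (b i, A i)

theorem linearCombination_farkasGenerators [Fintype m] (A : Matrix m n ℝ) (b : m → ℝ)
    (y : Option m → ℝ) :
    Fintype.linearCombination ℝ (farkasGenerators A b) y =
      (y none + (y ∘ some) ⬝ᵥ b, (y ∘ some) ᵥ* A) := by
  ext <;> simp [Fintype.linearCombination_apply, Fintype.sum_option, farkasGenerators,
    vecMul_eq_sum, dotProduct, Prod.fst_sum, Prod.snd_sum, mul_comm]

variable [Fintype n] {A : Matrix m n ℝ} {b : m → ℝ} {c : n → ℝ} {d : ℝ}

theorem exists_apply_prod_eq_mul_add_dotProduct {F : Type*} [FunLike F (ℝ × (n → ℝ)) ℝ]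
    [LinearMapClass F ℝ (ℝ × (n → ℝ)) ℝ] (f : F) :
    ∃ z : n → ℝ, ∀ t x, f (t, x) = t * f (1, 0) + x ⬝ᵥ z := by
  classical
  let g : (n → ℝ) →ₗ[ℝ] ℝ := (f : ℝ × (n → ℝ) →ₗ[ℝ] ℝ) ∘ₗ LinearMap.inr ℝ ℝ (n → ℝ)
  refine ⟨fun j => g fun j' => if j = j' then 1 else 0, fun t x => ?_⟩
  have hsplit : (t, x) = t • ((1 : ℝ), (0 : n → ℝ)) + ((0 : ℝ), x) := by ext <;> simp
  rw [hsplit, map_add, map_smul, smul_eq_mul]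
  exact congrArg _ ((g.pi_apply_eq_sum_univ x).trans (by simp [dotProduct]))

theorem exists_violation_of_homogeneous_pos {s : ℝ} {z : n → ℝ} (hs : 0 < s)
    (hz : 0 ≤ s • b + A *ᵥ z) (hdz : d * s + c ⬝ᵥ z < 0) :
    ∃ x, 0 ≤ b + A *ᵥ x ∧ d + c ⬝ᵥ x < 0 := by
  refine ⟨s⁻¹ • z, ?_, ?_⟩
  · have hscale : b + A *ᵥ (s⁻¹ • z) = s⁻¹ • (s • b + A *ᵥ z) := by
      rw [mulVec_smul, smul_add, smul_smul, inv_mul_cancel₀ hs.ne', one_smul]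
    rw [hscale]
    exact smul_nonneg (inv_nonneg.2 hs.le) hz
  · have hscale : d + c ⬝ᵥ (s⁻¹ • z) = s⁻¹ * (d * s + c ⬝ᵥ z) := by
      rw [dotProduct_smul, smul_eq_mul]
      field_simp
    rw [hscale]
    exact mul_neg_of_pos_of_neg (inv_pos.2 hs) hdz

theorem exists_violation_of_homogeneous (hsat : ∃ x, 0 ≤ b + A *ᵥ x) {s : ℝ} {z : n → ℝ}
    (hs : 0 ≤ s) (hz : 0 ≤ s • b + A *ᵥ z) (hdz : d * s + c ⬝ᵥ z < 0) :
    ∃ x, 0 ≤ b + A *ᵥ x ∧ d + c ⬝ᵥ x < 0 := by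
  obtain ⟨x₀, hx₀⟩ := hsat
  obtain ⟨t, ht, hts⟩ := exists_pos_mul_lt (neg_pos.2 hdz) (d + c ⬝ᵥ x₀)
  refine exists_violation_of_homogeneous_pos (s := s + t) (z := z + t • x₀) (by positivity) ?_ ?_
  · have hsum : (s + t) • b + A *ᵥ (z + t • x₀) = (s • b + A *ᵥ z) + t • (b + A *ᵥ x₀) := by
      rw [mulVec_add, mulVec_smul, add_smul, smul_add]
      abel
    rw [hsum]
    exact add_nonneg hz (smul_nonneg ht.le hx₀)
  · have hsum : d * (s + t) + c ⬝ᵥ (z + t • x₀) = (d * s + c ⬝ᵥ z) + (d + c ⬝ᵥ x₀) * t := by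
      rw [dotProduct_add, dotProduct_smul, smul_eq_mul]
      ring
    linarith

variable [Fintype m]

theorem exists_homogeneous_separator
    (h : ¬∃ (y₀ : ℝ) (y : m → ℝ), 0 ≤ y₀ ∧ 0 ≤ y ∧ d = y₀ + y ⬝ᵥ b ∧ c = y ᵥ* A) :
    ∃ (s : ℝ) (z : n → ℝ), 0 ≤ s ∧ 0 ≤ s • b + A *ᵥ z ∧ d * s + c ⬝ᵥ z < 0 := by
  classical
  set w := farkasGenerators A b
  let K : ProperCone ℝ (ℝ × (n → ℝ)) :=
    ⟨(PointedCone.positive ℝ (Option m → ℝ)).map (Fintype.linearCombination ℝ w), by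
      convert isClosed_image_linearCombination_Ici w
      ext; simp⟩
  have hmemK {p} : p ∈ K ↔ ∃ y, 0 ≤ y ∧ Fintype.linearCombination ℝ w y = p := by
    simp [K, PointedCone.mem_map, PointedCone.mem_positive]
  have hdc : (d, c) ∉ K := by
    intro hmem
    obtain ⟨y, hy, hyeq⟩ := hmemK.1 hmem
    rw [linearCombination_farkasGenerators, Prod.mk.injEq] at hyeq
    exact h ⟨y none, y ∘ some, hy none, fun i => hy (some i), hyeq.1.symm, hyeq.2.symm⟩
  obtain ⟨f, hfK, hfdc⟩ := K.hyperplane_separation_point hdc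
  have hw (o : Option m) : 0 ≤ f (w o) :=
    hfK _ (hmemK.2 ⟨Pi.single o 1, Pi.single_nonneg.2 zero_le_one, by
      simp [Fintype.linearCombination_apply_single]⟩)
  obtain ⟨z, hz⟩ := exists_apply_prod_eq_mul_add_dotProduct f
  refine ⟨f (1, 0), z, hw none, fun i => ?_, ?_⟩
  · have hi : 0 ≤ f (b i, A i) := hw (some i)
    rw [hz] at hi
    simpa [mulVec, mul_comm] using hi
  · rwa [hz] at hfdc

theorem nonneg_of_nonneg_combination {y₀ : ℝ} {y : m → ℝ} (hy₀ : 0 ≤ y₀) (hy : 0 ≤ y)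
    (hd : d = y₀ + y ⬝ᵥ b) (hc : c = y ᵥ* A) {x : n → ℝ} (hx : 0 ≤ b + A *ᵥ x) :
    0 ≤ d + c ⬝ᵥ x := by
  have hcomb : d + c ⬝ᵥ x = y₀ + y ⬝ᵥ (b + A *ᵥ x) := by
    rw [hd, hc, ← dotProduct_mulVec, dotProduct_add]
    ring
  rw [hcomb]
  exact add_nonneg hy₀ (dotProduct_nonneg_of_nonneg hy hx)

theorem affine_farkas (hsat : ∃ x, 0 ≤ b + A *ᵥ x) :
    (∀ x, 0 ≤ b + A *ᵥ x → 0 ≤ d + c ⬝ᵥ x) ↔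
      ∃ (y₀ : ℝ) (y : m → ℝ), 0 ≤ y₀ ∧ 0 ≤ y ∧ d = y₀ + y ⬝ᵥ b ∧ c = y ᵥ* A := by
  refine ⟨fun hent => ?_, fun ⟨y₀, y, hy₀, hy, hd, hc⟩ _ =>
    nonneg_of_nonneg_combination hy₀ hy hd hc⟩
  by_contra hcert
  obtain ⟨s, z, hs, hz, hdz⟩ := exists_homogeneous_separator hcert
  obtain ⟨x, hx, hdx⟩ := exists_violation_of_homogeneous hsat hs hz hdz
  exact (hent x hx).not_gt hdx

end AffineFarkas

/-- Farkas' lemma (entailment direction). -/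
theorem farkas_entailment (m n : ℕ) (a : Fin m → Fin n → ℝ) (a0 : Fin m → ℝ)
    (c : Fin n → ℝ) (c0 : ℝ)
    (hsat : ∃ x : Fin n → ℝ, ∀ i, a0 i + ∑ j, a i j * x j ≥ 0) :
    (∀ x : Fin n → ℝ, (∀ i, a0 i + ∑ j, a i j * x j ≥ 0) →
        c0 + ∑ j, c j * x j ≥ 0) ↔
    ∃ (y0 : ℝ) (y : Fin m → ℝ), 0 ≤ y0 ∧ (∀ i, 0 ≤ y i) ∧
      c0 = y0 + ∑ i, y i * a0 i ∧ ∀ j, c j = ∑ i, y i * a i j := by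
  have hsat' : ∃ x, 0 ≤ a0 + a *ᵥ x := by
    simpa only [Pi.le_def, Pi.add_apply, Pi.zero_apply, mulVec, dotProduct] using hsat
  simpa only [Pi.le_def, funext_iff, Pi.add_apply, Pi.zero_apply, mulVec, vecMul, dotProduct,
    ge_iff_le] using affine_farkas (A := a) (c := c) (d := c0) hsat'
end

section
/- Unsatisfiability via strict-inequality certificate (U2), soundness direction: Let f_1, …, f_m be real polynomials in variables x_1,…,x_n, with strict inequalities imposed on index j. Suppose there exist d ∈ ℕ and polynomials h'_1, …, h'_m over the variables x_1,…,x_n, w_1,…,w_m such that w_j^{2d} = Σ_{i=1}^m h'_i · (f_i − w_i^2) as polynomials, and suppose the j-th inequality is strict. Then the system f_j(x) > 0 together with f_i(x) ≥ 0 for all i ≠ j has no solution x ∈ ℝ^n. -/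
open MvPolynomial

theorem strict_unsat_cert_sound (n m : ℕ)
    (f : Fin m → MvPolynomial (Fin n) ℝ) (j : Fin m)
    (d : ℕ) (h' : Fin m → MvPolynomial (Fin n ⊕ Fin m) ℝ)
    (hcert : (X (Sum.inr j) : MvPolynomial (Fin n ⊕ Fin m) ℝ) ^ (2 * d) =
      ∑ i, h' i * (rename Sum.inl (f i) - (X (Sum.inr i)) ^ 2)) :
    ¬ ∃ x : Fin n → ℝ, 0 < eval x (f j) ∧ ∀ i, i ≠ j → 0 ≤ eval x (f i) := by
  rintro ⟨x, hj, hge⟩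
  have hnn : ∀ i, 0 ≤ eval x (f i) := by
    intro i
    by_cases h : i = j
    · subst h; exact hj.le
    · exact hge i h
  set v : Fin n ⊕ Fin m → ℝ := Sum.elim x (fun i => Real.sqrt (eval x (f i))) with hv
  have := congrArg (eval v) hcert
  simp only [map_sum, map_mul, map_sub, map_pow, eval_X, eval_rename] at this
  have hcomp : ∀ i : Fin m, (eval (v ∘ Sum.inl) (f i)) = eval x (f i) := by
    intro i; rfl
  rw [show v (Sum.inr j) = Real.sqrt (eval x (f j)) from rfl] at this
  have hz : ∀ i : Fin m,
      eval (v ∘ Sum.inl) (f i) - v (Sum.inr i) ^ 2 = 0 := by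
    intro i
    have : v (Sum.inr i) ^ 2 = eval x (f i) := Real.sq_sqrt (hnn i)
    rw [hcomp i, this, sub_self]
  simp only [hz, mul_zero, Finset.sum_const_zero] at this
  have hpos : 0 < Real.sqrt (eval x (f j)) := Real.sqrt_pos.mpr hj
  exact pow_ne_zero _ hpos.ne' this
end
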